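/- Consider lookahead Hedge over N experts with initial weights w_0^η > 0 summing to 1, losses ℓ_t(x_t^η), learning rate β > 0, and updates w_t^η = w_{t-1}^η e^{-β ℓ_t(x_t^η)} / Σ_η w_{t-1}^η e^{-β ℓ_t(x_t^η)} (using the current round's loss). Then for any expert η: Σ_{t=1}^T (Σ_η w_t^η ℓ_t(x_t^η) - ℓ_t(x_t^η)) ≤ (1/β) ln(1/w_0^η) - (1/(2β)) Σ_{t=1}^T ‖w_t - w_{t-1}‖₁². -/

import Mathlib

/-!
With `Z_t = ∑ η, w_{t-1}^η e^{-β ℓ_t^η}`, the update gives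
`log w_t^η - log w_{t-1}^η = -β ℓ_t^η - log Z_t` and hence
`KL(w_t ‖ w_{t-1}) = -β ⟨w_t, ℓ_t⟩ - log Z_t`. Pinsker's inequality
`KL(w_t ‖ w_{t-1}) ≥ ½ ‖w_t - w_{t-1}‖₁²` turns this into the per-round bound
`β (⟨w_t, ℓ_t⟩ - ℓ_t^η) + ½ ‖w_t - w_{t-1}‖₁² ≤ log w_t^η - log w_{t-1}^η`,
which telescopes, and `log w_T^η ≤ 0`.

Pinsker's inequality is derived from the pointwise bound
`t log t - t + 1 ≥ 3 (t - 1)² / (2 (t + 2))` applied to `t = p_i / q_i`, followed by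
Sedrakyan's form of Cauchy–Schwarz with weights `p_i + 2 q_i`, which sum to `3`.
-/

open Real Finset InformationTheory

section

open Set

lemma isMinOn_Ici_of_hasDerivAt {f f' : ℝ → ℝ} {a c : ℝ} (hac : a ≤ c)
    (hf : ContinuousOn f (Ici a)) (hf' : ∀ x, a < x → HasDerivAt f (f' x) x)
    (h_nonpos : ∀ x, a < x → x < c → f' x ≤ 0) (h_nonneg : ∀ x, c < x → 0 ≤ f' x) :
    IsMinOn f (Ici a) c := by
  intro x (hx : a ≤ x)
  rcases le_total x c with hxc | hcx
  · refine antitoneOn_of_hasDerivWithinAt_nonpos (f' := f') (convex_Icc a c)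
      (hf.mono Icc_subset_Ici_self) (fun y hy => ?_) (fun y hy => ?_) ⟨hx, hxc⟩ ⟨hac, le_rfl⟩ hxc
    · rw [interior_Icc] at hy
      exact (hf' y hy.1).hasDerivWithinAt
    · rw [interior_Icc] at hy
      exact h_nonpos y hy.1 hy.2
  · refine monotoneOn_of_hasDerivWithinAt_nonneg (f' := f') (convex_Ici c)
      (hf.mono (Ici_subset_Ici.2 hac)) (fun y hy => ?_) (fun y hy => ?_) (mem_Ici.2 le_rfl) hcx hcx
    · rw [interior_Ici] at hy
      exact (hf' y (hac.trans_lt hy)).hasDerivWithinAt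
    · rw [interior_Ici] at hy
      exact h_nonneg y hy

lemma monotoneOn_log_sub_two_mul_sub_one_div_add_one :
    MonotoneOn (fun t => log t - 2 * (t - 1) / (t + 1)) (Ioi 0) := by
  refine monotoneOn_of_hasDerivWithinAt_nonneg (f' := fun t => (t - 1) ^ 2 / (t * (t + 1) ^ 2))
    (convex_Ioi 0) ?_ (fun t ht => ?_) (fun t ht => ?_)
  · exact ContinuousOn.sub (continuousOn_log.mono fun t ht => ne_of_gt ht)
      (by fun_prop (disch := intro t (ht : 0 < t); positivity))
  · rw [interior_Ioi] at ht ⊢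
    have ht : 0 < t := ht
    have h := (hasDerivAt_log ht.ne').sub ((((hasDerivAt_id t).sub_const 1).const_mul 2).div
      ((hasDerivAt_id t).add_const 1) (by positivity))
    refine (h.congr_deriv ?_).hasDerivWithinAt
    simp only [id]
    field_simp
    ring
  · rw [interior_Ioi] at ht
    have ht : 0 < t := ht
    positivity

lemma hasDerivAt_klFun_sub_three_mul_sq_div {x : ℝ} (hx : 0 < x) :
    HasDerivAt (fun t => klFun t - 3 * (t - 1) ^ 2 / (2 * (t + 2)))
      (log x - 3 * (x - 1) * (x + 5) / (2 * (x + 2) ^ 2)) x := by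
  have hnum : HasDerivAt (fun t => 3 * (t - 1) ^ 2) (3 * (2 * (x - 1))) x := by
    simpa using (((hasDerivAt_id x).sub_const 1).pow 2).const_mul 3
  have hden : HasDerivAt (fun t => 2 * (t + 2)) 2 x := by
    simpa using ((hasDerivAt_id x).add_const 2).const_mul 2
  refine ((hasDerivAt_klFun hx.ne').sub (hnum.div hden (by positivity))).congr_deriv ?_
  field_simp
  ring

lemma three_mul_sq_div_le_klFun {t : ℝ} (ht : 0 ≤ t) :
    3 * (t - 1) ^ 2 / (2 * (t + 2)) ≤ klFun t := by
  set g : ℝ → ℝ := fun t => log t - 2 * (t - 1) / (t + 1)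
  have hg1 : g 1 = 0 := by simp [g]
  -- Both summands on the right have the sign of `x - 1`, since `g` is monotone with `g 1 = 0`.
  have hderiv_eq : ∀ x, 0 < x → log x - 3 * (x - 1) * (x + 5) / (2 * (x + 2) ^ 2) =
      g x + (x - 1) ^ 3 / (2 * (x + 1) * (x + 2) ^ 2) := by
    intro x hx
    simp only [g]
    field_simp
    ring
  have hmin : IsMinOn (fun t => klFun t - 3 * (t - 1) ^ 2 / (2 * (t + 2))) (Ici 0) 1 := by
    refine isMinOn_Ici_of_hasDerivAt zero_le_one
      (f' := fun x => log x - 3 * (x - 1) * (x + 5) / (2 * (x + 2) ^ 2)) ?_ (fun x hx => ?_)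
      (fun x hx hx1 => ?_) (fun x hx => ?_)
    · exact continuous_klFun.continuousOn.sub
        (by fun_prop (disch := intro t (ht : 0 ≤ t); positivity))
    · exact hasDerivAt_klFun_sub_three_mul_sq_div hx
    · have hgx : g x ≤ 0 := hg1 ▸ monotoneOn_log_sub_two_mul_sub_one_div_add_one hx
        (mem_Ioi.2 zero_lt_one) hx1.le
      have : (x - 1) ^ 3 / (2 * (x + 1) * (x + 2) ^ 2) ≤ 0 :=
        div_nonpos_of_nonpos_of_nonneg (Odd.pow_nonpos (by decide) (by linarith)) (by positivity)
      simp only [hderiv_eq x hx]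
      linarith
    · have hx0 : 0 < x := by linarith
      have hgx : 0 ≤ g x := hg1 ▸ monotoneOn_log_sub_two_mul_sub_one_div_add_one
        (mem_Ioi.2 zero_lt_one) hx0 hx.le
      have : 0 ≤ (x - 1) ^ 3 / (2 * (x + 1) * (x + 2) ^ 2) := by
        have : 0 ≤ x - 1 := by linarith
        positivity
      simp only [hderiv_eq x hx0]
      linarith
  have := hmin (mem_Ici.2 ht)
  simp only [klFun_one] at this
  norm_num at this
  linarith

lemma three_mul_sq_sub_div_le_mul_klFun {p q : ℝ} (hp : 0 ≤ p) (hq : 0 < q) :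
    3 * (p - q) ^ 2 / (2 * (p + 2 * q)) ≤ q * klFun (p / q) := by
  refine le_of_eq_of_le ?_
    (mul_le_mul_of_nonneg_left (three_mul_sq_div_le_klFun (div_nonneg hp hq.le)) hq.le)
  have : p + 2 * q ≠ 0 := by positivity
  field_simp

end

theorem sq_sum_abs_sub_div_two_le_sum_mul_log_div {ι : Type*} (s : Finset ι) {p q : ι → ℝ}
    (hp : ∀ i ∈ s, 0 ≤ p i) (hq : ∀ i ∈ s, 0 < q i)
    (hp_sum : ∑ i ∈ s, p i = 1) (hq_sum : ∑ i ∈ s, q i = 1) :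
    (∑ i ∈ s, |p i - q i|) ^ 2 / 2 ≤ ∑ i ∈ s, p i * log (p i / q i) := by
  have hpq : ∀ i ∈ s, 0 < p i + 2 * q i := fun i hi => by linarith [hp i hi, hq i hi]
  have hpq_sum : ∑ i ∈ s, (p i + 2 * q i) = 3 := by
    rw [sum_add_distrib, ← mul_sum, hp_sum, hq_sum]; norm_num
  calc (∑ i ∈ s, |p i - q i|) ^ 2 / 2
      = 3 / 2 * ((∑ i ∈ s, |p i - q i|) ^ 2 / ∑ i ∈ s, (p i + 2 * q i)) := by
        rw [hpq_sum]; ring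
    _ ≤ 3 / 2 * ∑ i ∈ s, |p i - q i| ^ 2 / (p i + 2 * q i) := by
        gcongr; exact sq_sum_div_le_sum_sq_div s _ hpq
    _ = ∑ i ∈ s, 3 * (p i - q i) ^ 2 / (2 * (p i + 2 * q i)) := by
        rw [mul_sum]
        refine sum_congr rfl fun i _ => ?_
        rw [sq_abs, mul_div_assoc', mul_comm 2, ← div_div]; ring
    _ ≤ ∑ i ∈ s, q i * klFun (p i / q i) :=
        sum_le_sum fun i hi => three_mul_sq_sub_div_le_mul_klFun (hp i hi) (hq i hi)
    _ = ∑ i ∈ s, p i * log (p i / q i) := by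
        have : ∀ i ∈ s, q i * klFun (p i / q i) = p i * log (p i / q i) + (q i - p i) :=
          fun i hi => by rw [klFun_apply]; field_simp [(hq i hi).ne']; ring
        rw [sum_congr rfl this, sum_add_distrib, sum_sub_distrib, hp_sum, hq_sum, sub_self,
          add_zero]

lemma sum_Icc_one_sub_pred {M : Type*} [AddCommGroup M] (f : ℕ → M) (n : ℕ) :
    ∑ t ∈ Icc 1 n, (f t - f (t - 1)) = f n - f 0 := by
  induction n with
  | zero => simp
  | succ n ih =>
    rw [sum_Icc_succ_top (by omega), ih, Nat.add_sub_cancel]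
    abel

section Hedge

variable {ι : Type*} [Fintype ι] (β : ℝ) (q ℓ : ι → ℝ)

/-- In the paper's notation, `hedgePartition β w_{t-1} ℓ_t = W_t / W_{t-1}`. -/
noncomputable def hedgePartition : ℝ := ∑ j, q j * exp (-β * ℓ j)

noncomputable def hedgeUpdate (i : ι) : ℝ := q i * exp (-β * ℓ i) / hedgePartition β q ℓ

variable {β q ℓ}

lemma hedgePartition_pos [Nonempty ι] (hq : ∀ j, 0 < q j) : 0 < hedgePartition β q ℓ :=
  sum_pos (fun j _ => mul_pos (hq j) (exp_pos _)) univ_nonempty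

lemma hedgeUpdate_pos (hq : ∀ j, 0 < q j) (i : ι) : 0 < hedgeUpdate β q ℓ i :=
  have : Nonempty ι := ⟨i⟩
  div_pos (mul_pos (hq i) (exp_pos _)) (hedgePartition_pos hq)

lemma sum_hedgeUpdate [Nonempty ι] (hq : ∀ j, 0 < q j) : ∑ i, hedgeUpdate β q ℓ i = 1 := by
  simp only [hedgeUpdate, ← sum_div]
  exact div_self (hedgePartition_pos hq).ne'

lemma log_hedgeUpdate (hq : ∀ j, 0 < q j) (i : ι) :
    log (hedgeUpdate β q ℓ i) = log (q i) - β * ℓ i - log (hedgePartition β q ℓ) := by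
  have : Nonempty ι := ⟨i⟩
  rw [hedgeUpdate, log_div (mul_pos (hq i) (exp_pos _)).ne' (hedgePartition_pos hq).ne',
    log_mul (hq i).ne' (exp_pos _).ne', log_exp]
  ring

lemma log_hedgePartition_le [Nonempty ι] (hq : ∀ j, 0 < q j) (hq_sum : ∑ j, q j = 1) :
    log (hedgePartition β q ℓ) ≤
      -β * ∑ j, hedgeUpdate β q ℓ j * ℓ j - (∑ j, |hedgeUpdate β q ℓ j - q j|) ^ 2 / 2 := by
  have hpinsker := sq_sum_abs_sub_div_two_le_sum_mul_log_div univ (p := hedgeUpdate β q ℓ)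
    (fun j _ => (hedgeUpdate_pos hq j).le) (fun j _ => hq j) (sum_hedgeUpdate hq) hq_sum
  have hKL : ∑ j, hedgeUpdate β q ℓ j * log (hedgeUpdate β q ℓ j / q j) =
      -β * ∑ j, hedgeUpdate β q ℓ j * ℓ j - log (hedgePartition β q ℓ) := by
    calc ∑ j, hedgeUpdate β q ℓ j * log (hedgeUpdate β q ℓ j / q j)
        = ∑ j, (-β * (hedgeUpdate β q ℓ j * ℓ j) -
            hedgeUpdate β q ℓ j * log (hedgePartition β q ℓ)) := sum_congr rfl fun j _ => by
          rw [log_div (hedgeUpdate_pos hq j).ne' (hq j).ne', log_hedgeUpdate hq]; ring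
      _ = _ := by rw [sum_sub_distrib, ← mul_sum, ← sum_mul, sum_hedgeUpdate hq, one_mul]
  linarith

lemma hedge_weights_pos_and_sum_eq_one [Nonempty ι] {w : ℕ → ι → ℝ} {ℓ : ℕ → ι → ℝ}
    (hw : ∀ t, w (t + 1) = hedgeUpdate β (w t) (ℓ (t + 1)))
    (hw0_pos : ∀ j, 0 < w 0 j) (hw0_sum : ∑ j, w 0 j = 1) (t : ℕ) :
    (∀ j, 0 < w t j) ∧ ∑ j, w t j = 1 := by
  induction t with
  | zero => exact ⟨hw0_pos, hw0_sum⟩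
  | succ t ih => rw [hw t]; exact ⟨hedgeUpdate_pos ih.1, sum_hedgeUpdate ih.1⟩

end Hedge

open Finset in
/-- Lookahead Hedge: the weights are updated using the current round's losses,
`w t η = w (t-1) η * exp (-β ℓ t η) / ∑ η', w (t-1) η' * exp (-β ℓ t η')`.
Regret bound with negative stability terms. -/
theorem stmt_9 (N T : ℕ) (β : ℝ) (hβ : 0 < β)
    (ℓ : ℕ → Fin N → ℝ) (w : ℕ → Fin N → ℝ)
    (hw0pos : ∀ i, 0 < w 0 i) (hw0sum : ∑ i, w 0 i = 1)
    (hupd : ∀ t, 1 ≤ t → ∀ i,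
      w t i = w (t - 1) i * Real.exp (-β * ℓ t i) /
        ∑ j, w (t - 1) j * Real.exp (-β * ℓ t j)) :
    ∀ i : Fin N,
      ∑ t ∈ Icc 1 T, ((∑ j, w t j * ℓ t j) - ℓ t i) ≤
        (1 / β) * Real.log (1 / w 0 i) -
          (1 / (2 * β)) * ∑ t ∈ Icc 1 T, (∑ j, |w t j - w (t - 1) j|) ^ 2 := by
  intro i
  have : Nonempty (Fin N) := ⟨i⟩
  have hw : ∀ t, w (t + 1) = hedgeUpdate β (w t) (ℓ (t + 1)) :=
    fun t => funext (hupd (t + 1) (by omega))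
  obtain ⟨hpos, hsum⟩ := forall_and.1 (hedge_weights_pos_and_sum_eq_one hw hw0pos hw0sum)
  have hround : ∀ t ∈ Icc 1 T, β * (∑ j, w t j * ℓ t j - ℓ t i) +
      (∑ j, |w t j - w (t - 1) j|) ^ 2 / 2 ≤ log (w t i) - log (w (t - 1) i) := by
    intro t ht
    obtain ⟨s, rfl⟩ : ∃ s, t = s + 1 := ⟨t - 1, by grind⟩
    simp only [Nat.add_sub_cancel, hw s, log_hedgeUpdate (hpos s)]
    linarith [log_hedgePartition_le (ℓ := ℓ (s + 1)) (β := β) (hpos s) (hsum s)]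
  have hlogT : log (w T i) ≤ 0 :=
    log_nonpos (hpos T i).le (hsum T ▸ single_le_sum (fun j _ => (hpos T j).le) (mem_univ i))
  have htotal := sum_le_sum hround
  rw [sum_Icc_one_sub_pred (fun t => log (w t i)), sum_add_distrib, ← mul_sum, ← sum_div]
    at htotal
  rw [one_div (w 0 i), log_inv, ← sub_nonneg]
  have : 0 ≤ (-log (w 0 i) - (∑ t ∈ Icc 1 T, (∑ j, |w t j - w (t - 1) j|) ^ 2) / 2 -
      β * ∑ t ∈ Icc 1 T, (∑ j, w t j * ℓ t j - ℓ t i)) / β := div_nonneg (by linarith) hβ.le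
  convert this using 1
  field_simp
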